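/- arXiv:1506.00861 — 2 statements merged into one kernel-verified Lean document; each statement's English description precedes it below -/
import Mathlib

section
/- Let β₀, β₁, β₂ ∈ ℝ² be in general position, let K: ℝ → ℝ be measurable, and let F₀, F₁, F₂: ℝ² → ℝ be measurable functions such that (x₀,x₁,x₂) ↦ ∏_{i=0}^{2} |F_i(π_i(x₀,x₁,x₂))| · |K(x₀+x₁+x₂)| is integrable on ℝ³. Then ∭_{ℝ³} ∏_{i=0}^{2} F_i(π_i(x₀,x₁,x₂)) K(x₀+x₁+x₂) dx₀ dx₁ dx₂ = |det B|⁻¹ ∬_{ℝ²} ∫_ℝ ∏_{i=0}^{2} F̃_i((u,v) − β_i t) K(t) dt du dv, where F̃_i(u,v) := F_i(π_i(B⁻¹(0,u,v)ᵀ)). -/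
open MeasureTheory Matrix

noncomputable section

/-- The matrix `B` whose first row is `(1,1,1)` and whose lower `2×3` block has columns
`β₀, β₁, β₂ ∈ ℝ²`. -/
def Bmat (β : Fin 3 → ℝ × ℝ) : Matrix (Fin 3) (Fin 3) ℝ :=
  Matrix.of fun r c => if r = 0 then 1 else if r = 1 then (β c).1 else (β c).2

/-- The coordinate projection `π_i(x₀,x₁,x₂) = (x_{i+1}, x_{i-1})`, indices mod 3. -/
def projC (i : Fin 3) (x : Fin 3 → ℝ) : ℝ × ℝ := (x (i + 1), x (i - 1))

/-- the change of variables identity relating the singular form with kernel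
`K(x₀+x₁+x₂)` to the superposition of two-dimensional bilinear-Hilbert-transform-type forms,
where `F̃ᵢ(u,v) = Fᵢ(πᵢ(B⁻¹(0,u,v)ᵀ))`. -/
theorem stmt14 (β : Fin 3 → ℝ × ℝ) (hβ : (Bmat β).det ≠ 0)
    (K : ℝ → ℝ) (hK : Measurable K)
    (F : Fin 3 → (ℝ × ℝ → ℝ)) (hF : ∀ i, Measurable (F i))
    (hint : Integrable (fun x : Fin 3 → ℝ =>
      (∏ i, |F i (projC i x)|) * |K (x 0 + x 1 + x 2)|)) :
    (∫ x : Fin 3 → ℝ, (∏ i, F i (projC i x)) * K (x 0 + x 1 + x 2)) =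
      |(Bmat β).det|⁻¹ *
        ∫ uv : ℝ × ℝ, ∫ t : ℝ,
          (∏ i, F i (projC i ((Bmat β)⁻¹ *ᵥ ![0, (uv - t • β i).1, (uv - t • β i).2]))) *
            K t := by
  classical
  set B := Bmat β with hBdef
  have hunit : IsUnit B.det := isUnit_iff_ne_zero.2 hβ
  have hBinv : B⁻¹ * B = 1 := Matrix.nonsing_inv_mul B hunit
  -- key algebraic identity
  have key : ∀ (i : Fin 3) (t : ℝ) (uv : ℝ × ℝ),
      projC i (B⁻¹ *ᵥ ![t, uv.1, uv.2]) =
        projC i (B⁻¹ *ᵥ ![0, (uv - t • β i).1, (uv - t • β i).2]) := by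
    intro i t uv
    have hcol : B *ᵥ Pi.single i 1 = ![1, (β i).1, (β i).2] := by
      funext r
      rw [Matrix.mulVec_single]
      fin_cases r <;> simp [hBdef, Bmat]
    have hx : ![t, uv.1, uv.2] =
        ![0, (uv - t • β i).1, (uv - t • β i).2] +
          t • (![1, (β i).1, (β i).2] : Fin 3 → ℝ) := by
      funext r; fin_cases r <;> simp
    have hsplit : B⁻¹ *ᵥ ![t, uv.1, uv.2] =
        B⁻¹ *ᵥ ![0, (uv - t • β i).1, (uv - t • β i).2] +
          t • (Pi.single i 1 : Fin 3 → ℝ) := by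
      rw [hx, ← hcol, Matrix.mulVec_add, Matrix.mulVec_smul, Matrix.mulVec_mulVec,
        hBinv, Matrix.one_mulVec]
    have h1 : i + 1 ≠ i := by fin_cases i <;> decide
    have h2 : i - 1 ≠ i := by fin_cases i <;> decide
    rw [hsplit]
    unfold projC
    simp [Pi.single_eq_of_ne h1, Pi.single_eq_of_ne h2]
  -- the function on the left
  set g : (Fin 3 → ℝ) → ℝ :=
    fun x => (∏ i, F i (projC i x)) * K (x 0 + x 1 + x 2) with hgdef
  have hproj : ∀ i, Measurable fun x : Fin 3 → ℝ => projC i x := fun i =>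
    (measurable_pi_apply _).prodMk (measurable_pi_apply _)
  have hgm : Measurable g :=
    (Finset.measurable_prod Finset.univ fun i _ => (hF i).comp (hproj i)).mul
      (hK.comp (((measurable_pi_apply 0).add (measurable_pi_apply 1)).add
        (measurable_pi_apply 2)))
  have hgi : Integrable g := by
    have hnorm : (fun x : Fin 3 → ℝ => ‖g x‖) =
        fun x => (∏ i, |F i (projC i x)|) * |K (x 0 + x 1 + x 2)| := by
      funext x
      simp [hgdef, Real.norm_eq_abs, abs_mul, Finset.abs_prod]
    exact (integrable_norm_iff hgm.aestronglyMeasurable).1 (hnorm ▸ hint)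
  -- the function after the linear change of variables
  set h : (Fin 3 → ℝ) → ℝ :=
    fun y => (∏ i, F i (projC i (B⁻¹ *ᵥ y))) * K (y 0) with hhdef
  have hhm : Measurable h := by
    refine (Finset.measurable_prod Finset.univ fun i _ => (hF i).comp ?_).mul
      (hK.comp (measurable_pi_apply 0))
    exact (hproj i).comp (measurable_pi_lambda _ fun r =>
      Finset.measurable_sum Finset.univ fun c _ =>
        (measurable_pi_apply c).const_mul _)
  -- the measurable equivalence coming from B
  have hinvB : Invertible B := B.invertibleOfIsUnitDet hunit
  let eL : (Fin 3 → ℝ) ≃ₗ[ℝ] (Fin 3 → ℝ) := B.toLinearEquiv' hinvB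
  let eM : (Fin 3 → ℝ) ≃ᵐ (Fin 3 → ℝ) :=
    eL.toContinuousLinearEquiv.toHomeomorph.toMeasurableEquiv
  have heM : ∀ x, eM x = B *ᵥ x := fun x => rfl
  have hmap : Measure.map (⇑eM) volume = ENNReal.ofReal |B.det|⁻¹ • volume := by
    have hdet : LinearMap.det (Matrix.toLin' B) ≠ 0 := by
      rwa [LinearMap.det_toLin']
    have h2 := Real.map_linearMap_volume_pi_eq_smul_volume_pi hdet
    rw [LinearMap.det_toLin', abs_inv] at h2
    have hco : ⇑eM = ⇑(Matrix.toLin' B) := by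
      funext x; rw [heM, Matrix.toLin'_apply]
    rw [hco]; exact h2
  have hBB : ∀ x : Fin 3 → ℝ, B⁻¹ *ᵥ (B *ᵥ x) = x := fun x => by
    rw [Matrix.mulVec_mulVec, hBinv, Matrix.one_mulVec]
  have hrow0 : ∀ x : Fin 3 → ℝ, (B *ᵥ x) 0 = x 0 + x 1 + x 2 := fun x => by
    simp [Matrix.mulVec, dotProduct, Fin.sum_univ_three, hBdef, Bmat]
  have hgh : ∀ x, g x = h (eM x) := fun x => by
    rw [heM]; simp only [hhdef, hgdef, hBB, hrow0]
  -- step 1 : linear change of variables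
  have hstep1 : (∫ x, g x) = |B.det|⁻¹ * ∫ y, h y := by
    calc (∫ x, g x) = (∫ x, h (eM x)) :=
            integral_congr_ae (Filter.Eventually.of_forall fun x => hgh x)
      _ = (∫ y, h y ∂(Measure.map (⇑eM) volume)) :=
            (MeasureTheory.integral_map_equiv eM h).symm
      _ = |B.det|⁻¹ * ∫ y, h y := by
            rw [hmap, integral_smul_measure, ENNReal.toReal_ofReal (by positivity),
              smul_eq_mul]
  have hhi : Integrable h := by
    have h1 : Integrable h (Measure.map (⇑eM) volume) := by
      rw [MeasureTheory.integrable_map_equiv eM h]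
      exact hgi.congr (Filter.Eventually.of_forall fun x => hgh x)
    rw [hmap] at h1
    exact (integrable_smul_measure (by positivity)
      ENNReal.ofReal_ne_top).1 h1
  -- step 2 : splitting ℝ³ as ℝ × ℝ²
  let e2 : (Fin 3 → ℝ) ≃ᵐ ℝ × (ℝ × ℝ) :=
    (MeasurableEquiv.piFinSuccAbove (fun _ : Fin 3 => ℝ) 0).trans
      ((MeasurableEquiv.refl ℝ).prodCongr MeasurableEquiv.finTwoArrow)
  have hmp : MeasurePreserving (⇑e2) volume volume := by
    have h1 := volume_preserving_piFinSuccAbove (fun _ : Fin 3 => ℝ) 0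
    have h2 := (MeasurePreserving.id (volume : Measure ℝ)).prod
      (volume_preserving_finTwoArrow ℝ)
    exact h2.comp h1
  have hmps : MeasurePreserving (⇑e2.symm) volume volume :=
    MeasurePreserving.symm e2 hmp
  have he2symm : ∀ p : ℝ × (ℝ × ℝ), e2.symm p = ![p.1, p.2.1, p.2.2] := by
    intro p; funext j; fin_cases j <;> rfl
  set G : ℝ × (ℝ × ℝ) → ℝ := fun p =>
    (∏ i, F i (projC i (B⁻¹ *ᵥ ![0, (p.2 - p.1 • β i).1, (p.2 - p.1 • β i).2]))) * K p.1
    with hGdef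
  have hhG : ∀ p, h (e2.symm p) = G p := by
    intro p
    rw [he2symm]
    simp only [hhdef, hGdef, Matrix.cons_val_zero]
    exact congrArg (· * K p.1)
      (Finset.prod_congr rfl fun i _ => by rw [key i p.1 p.2])
  have hstep2 : (∫ y, h y) = ∫ p : ℝ × (ℝ × ℝ), G p := by
    rw [← hmps.integral_comp' h]
    exact integral_congr_ae (Filter.Eventually.of_forall fun p => hhG p)
  have hGint : Integrable G := by
    have := (hmps.integrable_comp_emb e2.symm.measurableEmbedding (g := h)).2 hhi
    exact this.congr (Filter.Eventually.of_forall fun p => hhG p)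
  have hswap : (∫ p : ℝ × (ℝ × ℝ), G p) = ∫ uv : ℝ × ℝ, ∫ t : ℝ, G (t, uv) := by
    have hGint' : Integrable G ((volume : Measure ℝ).prod (volume : Measure (ℝ × ℝ))) := by
      rwa [← Measure.volume_eq_prod]
    have h1 : (∫ p : ℝ × (ℝ × ℝ), G p) = ∫ t : ℝ, ∫ uv : ℝ × ℝ, G (t, uv) := by
      rw [Measure.volume_eq_prod]
      exact MeasureTheory.integral_prod G hGint'
    rw [h1]
    have h2 : Integrable (Function.uncurry fun t uv => G (t, uv))
        ((volume : Measure ℝ).prod (volume : Measure (ℝ × ℝ))) := by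
      exact hGint'.congr (Filter.Eventually.of_forall fun p => rfl)
    exact MeasureTheory.integral_integral_swap h2
  calc (∫ x : Fin 3 → ℝ, (∏ i, F i (projC i x)) * K (x 0 + x 1 + x 2)) = ∫ x, g x := rfl
    _ = |B.det|⁻¹ * ∫ y, h y := hstep1
    _ = |B.det|⁻¹ * ∫ uv : ℝ × ℝ, ∫ t : ℝ, G (t, uv) := by rw [hstep2, hswap]
    _ = _ := rfl
end
end

section
/- Let B be an invertible 3×3 real matrix whose first row is (1,1,1). Then for each i ∈ {1,2,3}, the 2×2 submatrix of B⁻¹ obtained by deleting the first column and the i-th row of B⁻¹ has determinant equal to ±(det B)⁻¹; in particular the absolute value of this determinant equals |det B|⁻¹. -/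
open Matrix

/-- if `B` is an invertible `3×3` real matrix whose first row is `(1,1,1)`, then
for each `i` the `2×2` submatrix of `B⁻¹` obtained by deleting the first column and the `i`-th
row has determinant `±(det B)⁻¹`; in particular its absolute value is `|det B|⁻¹`. -/
theorem stmt16 (B : Matrix (Fin 3) (Fin 3) ℝ) (hB : IsUnit B.det)
    (hrow : ∀ j, B 0 j = 1) (i : Fin 3) :
    ((B⁻¹.submatrix i.succAbove Fin.succ).det = B.det⁻¹ ∨
      (B⁻¹.submatrix i.succAbove Fin.succ).det = -(B.det⁻¹)) ∧
    |(B⁻¹.submatrix i.succAbove Fin.succ).det| = |B.det|⁻¹ := by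
  have hdne : B.det ≠ 0 := hB.ne_zero
  have hadj : adjugate (B⁻¹) = B.det⁻¹ • B := by
    have h1 := Matrix.inv_def (B⁻¹)
    rw [Matrix.nonsing_inv_nonsing_inv B hB, Matrix.det_nonsing_inv,
      Ring.inverse_eq_inv, Ring.inverse_eq_inv, inv_inv] at h1
    have h2 := congrArg (fun M => B.det⁻¹ • M) h1
    simpa [smul_smul, inv_mul_cancel₀ hdne] using h2.symm
  have key : adjugate (B⁻¹) 0 i =
      (-1 : ℝ) ^ (i : ℕ) * (B⁻¹.submatrix i.succAbove Fin.succ).det := by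
    rw [Matrix.adjugate_fin_succ_eq_det_submatrix]
    simp [Fin.succAbove_zero]
  have hval : adjugate (B⁻¹) 0 i = B.det⁻¹ := by
    rw [hadj]; simp [hrow]
  have hsq : ((-1 : ℝ) ^ (i : ℕ)) * ((-1 : ℝ) ^ (i : ℕ)) = 1 := by
    rw [← pow_add, ← two_mul, pow_mul]; norm_num
  have hdet : (B⁻¹.submatrix i.succAbove Fin.succ).det = (-1 : ℝ) ^ (i : ℕ) * B.det⁻¹ := by
    rw [← hval, key, ← mul_assoc, hsq, one_mul]
  constructor
  · rcases Nat.even_or_odd (i : ℕ) with h | h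
    · left; rw [hdet, h.neg_one_pow, one_mul]
    · right; rw [hdet, h.neg_one_pow, neg_one_mul]
  · rw [hdet, abs_mul, abs_pow, abs_neg, abs_one, one_pow, one_mul, abs_inv]
end
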